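/- arXiv:2101.09540 — 3 statements merged into one kernel-verified Lean document; each statement's English description precedes it below -/
import Mathlib

section
/- For every 2×2 unitary complex matrix U there exists a real 3×3 matrix O that is orthogonal with determinant 1 (i.e. O ∈ SO(3)) such that U σ_i U† = Σ_{j=1}^{3} O_{ij} σ_j for each i = 1, 2, 3. -/
open Matrix
open scoped Kronecker

/-- The Pauli matrices σ₁, σ₂, σ₃ (indexed by `Fin 3`). -/
noncomputable def pauli : Fin 3 → Matrix (Fin 2) (Fin 2) ℂ :=
  ![!![0, 1; 1, 0], !![0, -Complex.I; Complex.I, 0], !![1, 0; 0, -1]]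

private lemma pauli_key_aux (p q r s : ℝ) (i : Fin 3) :
    (!![(p:ℂ)+q*Complex.I, (r:ℂ)+s*Complex.I;
        -((r:ℂ)-s*Complex.I), (p:ℂ)-q*Complex.I] : Matrix (Fin 2) (Fin 2) ℂ) * pauli i *
      (!![(p:ℂ)+q*Complex.I, (r:ℂ)+s*Complex.I;
          -((r:ℂ)-s*Complex.I), (p:ℂ)-q*Complex.I] : Matrix (Fin 2) (Fin 2) ℂ)ᴴ =
    ∑ j : Fin 3, (((!![p^2 - q^2 - r^2 + s^2, 2*(r*s - p*q), 2*(q*s + p*r);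
         2*(r*s + p*q), p^2 - q^2 + r^2 - s^2, 2*(q*r - p*s);
         2*(q*s - p*r), 2*(q*r + p*s), p^2 + q^2 - r^2 - s^2] :
            Matrix (Fin 3) (Fin 3) ℝ) i j : ℝ) : ℂ) • pauli j := by
  fin_cases i <;> (ext k l; fin_cases k <;> fin_cases l) <;>
    simp [pauli, Matrix.mul_apply, Fin.sum_univ_succ, Complex.ext_iff,
      Matrix.conjTranspose_apply]
  all_goals constructor
  all_goals try simp [← Complex.ofReal_pow]
  all_goals try ring

/-- For every 2×2 unitary complex matrix `U` there exists a real 3×3 matrix `O` that is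
orthogonal with determinant 1 (i.e. `O ∈ SO(3)`) such that
`U σᵢ U† = ∑ⱼ O i j • σⱼ` for each `i`. -/
theorem pauli_conjugation_gives_SO3 (U : Matrix (Fin 2) (Fin 2) ℂ)
    (hU : U ∈ Matrix.unitaryGroup (Fin 2) ℂ) :
    ∃ O : Matrix (Fin 3) (Fin 3) ℝ,
      Oᵀ * O = 1 ∧ O.det = 1 ∧
      ∀ i : Fin 3, U * pauli i * Uᴴ = ∑ j : Fin 3, ((O i j : ℝ) : ℂ) • pauli j := by
  have h1 : Uᴴ * U = 1 := by
    simpa [Matrix.star_eq_conjTranspose] using hU.1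
  have h2 : U * Uᴴ = 1 := by
    simpa [Matrix.star_eq_conjTranspose] using hU.2
  -- entry relations
  have C1 : (starRingEnd ℂ) (U 0 0) * U 0 0 + (starRingEnd ℂ) (U 1 0) * U 1 0 = 1 := by
    have := congrFun (congrFun h1 0) 0
    simpa [Matrix.mul_apply, Fin.sum_univ_succ, Matrix.conjTranspose_apply] using this
  have C2 : (starRingEnd ℂ) (U 0 0) * U 0 1 + (starRingEnd ℂ) (U 1 0) * U 1 1 = 0 := by
    have := congrFun (congrFun h1 0) 1
    simpa [Matrix.mul_apply, Fin.sum_univ_succ, Matrix.conjTranspose_apply] using this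
  have C3 : (starRingEnd ℂ) (U 0 1) * U 0 1 + (starRingEnd ℂ) (U 1 1) * U 1 1 = 1 := by
    have := congrFun (congrFun h1 1) 1
    simpa [Matrix.mul_apply, Fin.sum_univ_succ, Matrix.conjTranspose_apply] using this
  have R1 : U 0 0 * (starRingEnd ℂ) (U 0 0) + U 0 1 * (starRingEnd ℂ) (U 0 1) = 1 := by
    have := congrFun (congrFun h2 0) 0
    simpa [Matrix.mul_apply, Fin.sum_univ_succ, Matrix.conjTranspose_apply] using this
  -- determinant facts
  have hdet : U.det * (starRingEnd ℂ) U.det = 1 := by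
    have := congrArg Matrix.det h2
    rwa [Matrix.det_mul, Matrix.det_conjTranspose, Matrix.det_one] at this
  have hdet0 : U.det ≠ 0 := by
    intro h; rw [h] at hdet; simp at hdet
  obtain ⟨z, hz2⟩ : ∃ z : ℂ, z ^ 2 = U.det := ⟨_, Complex.cpow_nat_inv_pow _ two_ne_zero⟩
  have hz0 : z ≠ 0 := by
    intro h; rw [h] at hz2; simp at hz2; exact hdet0 hz2.symm
  have hnz : Complex.normSq z = 1 := by
    have h4 : (Complex.normSq z : ℂ) ^ 2 = 1 := by
      rw [← Complex.mul_conj]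
      have hcz : (starRingEnd ℂ) z ^ 2 = (starRingEnd ℂ) U.det := by
        rw [← map_pow, hz2]
      calc (z * (starRingEnd ℂ) z) ^ 2 = z ^ 2 * (starRingEnd ℂ) z ^ 2 := by ring
        _ = U.det * (starRingEnd ℂ) U.det := by rw [hz2, hcz]
        _ = 1 := hdet
    have h5 : (Complex.normSq z) ^ 2 = 1 := by exact_mod_cast h4
    nlinarith [Complex.normSq_nonneg z]
  have hzz : z * (starRingEnd ℂ) z = 1 := by
    rw [Complex.mul_conj, hnz]; norm_num
  set p := (U 0 0 / z).re with hp
  set q := (U 0 0 / z).im with hq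
  set r := (U 0 1 / z).re with hr
  set s := (U 0 1 / z).im with hs
  have ha : U 0 0 = z * ((p : ℂ) + q * Complex.I) := by
    rw [hp, hq, Complex.re_add_im, mul_div_cancel₀ _ hz0]
  have hb : U 0 1 = z * ((r : ℂ) + s * Complex.I) := by
    rw [hr, hs, Complex.re_add_im, mul_div_cancel₀ _ hz0]
  -- structure relations
  have hd' : U 1 1 = U.det * (starRingEnd ℂ) (U 0 0) := by
    rw [Matrix.det_fin_two]
    linear_combination U 1 0 * C2 - U 1 1 * C1
  have hc' : U 1 0 = -(U.det * (starRingEnd ℂ) (U 0 1)) := by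
    have C2' : U 0 0 * (starRingEnd ℂ) (U 0 1) + U 1 0 * (starRingEnd ℂ) (U 1 1) = 0 := by
      have := congrArg (starRingEnd ℂ) C2
      simpa using this
    rw [Matrix.det_fin_two]
    linear_combination U 1 1 * C2' - U 1 0 * C3
  have hca : (starRingEnd ℂ) (U 0 0) = (starRingEnd ℂ) z * ((p : ℂ) - q * Complex.I) := by
    rw [ha, _root_.map_mul, map_add, _root_.map_mul, Complex.conj_ofReal, Complex.conj_ofReal, Complex.conj_I]; ring
  have hcb : (starRingEnd ℂ) (U 0 1) = (starRingEnd ℂ) z * ((r : ℂ) - s * Complex.I) := by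
    rw [hb, _root_.map_mul, map_add, _root_.map_mul, Complex.conj_ofReal, Complex.conj_ofReal, Complex.conj_I]; ring
  have hd : U 1 1 = z * ((p : ℂ) - q * Complex.I) := by
    rw [hd', ← hz2, hca]
    linear_combination z * ((p : ℂ) - q * Complex.I) * hzz
  have hc : U 1 0 = -(z * ((r : ℂ) - s * Complex.I)) := by
    rw [hc', ← hz2, hcb]
    linear_combination (-(z * ((r : ℂ) - s * Complex.I))) * hzz
  have hsum : p ^ 2 + q ^ 2 + r ^ 2 + s ^ 2 = 1 := by
    have hnormab : Complex.normSq (U 0 0) + Complex.normSq (U 0 1) = 1 := by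
      have h6 : (Complex.normSq (U 0 0) : ℂ) + (Complex.normSq (U 0 1) : ℂ) = 1 := by
        rw [← Complex.mul_conj, ← Complex.mul_conj]; exact R1
      exact_mod_cast h6
    have e1 : Complex.normSq (U 0 0) = p ^ 2 + q ^ 2 := by
      rw [ha, Complex.normSq_mul, hnz, one_mul]
      simp [Complex.normSq_apply]
      ring
    have e2 : Complex.normSq (U 0 1) = r ^ 2 + s ^ 2 := by
      rw [hb, Complex.normSq_mul, hnz, one_mul]
      simp [Complex.normSq_apply]
      ring
    linarith
  refine ⟨!![p^2 - q^2 - r^2 + s^2, 2*(r*s - p*q), 2*(q*s + p*r);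
         2*(r*s + p*q), p^2 - q^2 + r^2 - s^2, 2*(q*r - p*s);
         2*(q*s - p*r), 2*(q*r + p*s), p^2 + q^2 - r^2 - s^2], ?_, ?_, ?_⟩
  · ext i j
    fin_cases i <;> fin_cases j <;>
      simp [Matrix.mul_apply, Fin.sum_univ_succ, Matrix.one_apply,
        Matrix.transpose_apply] <;>
      first
        | linear_combination (p ^ 2 + q ^ 2 + r ^ 2 + s ^ 2 + 1) * hsum
        | ring
  · rw [Matrix.det_fin_three]
    simp
    linear_combination ((p ^ 2 + q ^ 2 + r ^ 2 + s ^ 2) ^ 2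
      + (p ^ 2 + q ^ 2 + r ^ 2 + s ^ 2) + 1) * hsum
  · intro i
    have hUV : U = z • (!![(p:ℂ)+q*Complex.I, (r:ℂ)+s*Complex.I;
        -((r:ℂ)-s*Complex.I), (p:ℂ)-q*Complex.I] : Matrix (Fin 2) (Fin 2) ℂ) := by
      ext k l
      fin_cases k <;> fin_cases l <;>
        simp [ha, hb, hc, hd] <;> ring
    rw [hUV, Matrix.conjTranspose_smul, Matrix.smul_mul, Matrix.smul_mul,
      Matrix.mul_smul, smul_smul]
    have hzz' : z * star z = 1 := hzz
    rw [hzz', one_smul]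
    exact pauli_key_aux p q r s i
end

section
/- (Theorem 1) Let ρ be a three-qubit state, F_A, F_B, F_C positive semidefinite 2×2 matrices with N = tr[(F_A⊗F_B⊗F_C) ρ (F_A⊗F_B⊗F_C)†] > 0, and ρ' = (F_A⊗F_B⊗F_C) ρ (F_A⊗F_B⊗F_C)†/N. Let M' be the 3×9 real matrix with entries M'_{j,(i,k)} = tr[ρ'(σ_i⊗σ_j⊗σ_k)], and let λ₁' be the maximal singular value of M', i.e. the square root of the largest eigenvalue of M'(M')ᵀ. Then for all unit vectors a, a', b, b', c, c' ∈ ℝ³, the Svetlichny operator S built from them satisfies |tr(S ρ')| ≤ 4 λ₁'. -/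
open Matrix
open scoped Kronecker ComplexOrder

/-- The observable `G = g₁σ₁ + g₂σ₂ + g₃σ₃` associated to a real vector `g ∈ ℝ³`. -/
noncomputable def obs (g : Fin 3 → ℝ) : Matrix (Fin 2) (Fin 2) ℂ :=
  ∑ i : Fin 3, ((g i : ℝ) : ℂ) • pauli i

/-- The Svetlichny operator built from the unit vectors `a, a', b, b', c, c' ∈ ℝ³`. -/
noncomputable def svetlichny (a a' b b' c c' : Fin 3 → ℝ) :
    Matrix (Fin 2 × Fin 2 × Fin 2) (Fin 2 × Fin 2 × Fin 2) ℂ :=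
  obs a ⊗ₖ ((obs b + obs b') ⊗ₖ obs c + (obs b - obs b') ⊗ₖ obs c')
    + obs a' ⊗ₖ ((obs b - obs b') ⊗ₖ obs c - (obs b + obs b') ⊗ₖ obs c')

/-! Expanding the observables in the Pauli basis turns `tr(S ρ')` into the real number
`⟪b + b', M' w₁⟫ + ⟪b - b', M' w₂⟫`, where `w₁ + i w₂ = (a + i a') ⊗ (c + i c')`.
By Cauchy–Schwarz its square is at most `(‖b + b'‖² + ‖b - b'‖²) · λ₁'² · (‖w₁‖² + ‖w₂‖²)`,
and both sums of squares equal `4` for unit vectors. -/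

namespace Matrix

variable {m n p : Type*} [Fintype m] [Fintype n] [Fintype p]

theorem dotProduct_self_nonneg (u : n → ℝ) : 0 ≤ u ⬝ᵥ u :=
  dotProduct_self_star_nonneg u

theorem sq_dotProduct_le (u v : n → ℝ) : (u ⬝ᵥ v) ^ 2 ≤ (u ⬝ᵥ u) * (v ⬝ᵥ v) := by
  simpa only [dotProduct, sq] using Finset.sum_mul_sq_le_sq_mul_sq Finset.univ u v

theorem sq_dotProduct_add_dotProduct_le (p₁ p₂ u₁ u₂ : n → ℝ) :
    (p₁ ⬝ᵥ u₁ + p₂ ⬝ᵥ u₂) ^ 2 ≤ (p₁ ⬝ᵥ p₁ + p₂ ⬝ᵥ p₂) * (u₁ ⬝ᵥ u₁ + u₂ ⬝ᵥ u₂) := by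
  simpa only [sumElim_dotProduct_sumElim] using
    sq_dotProduct_le (Sum.elim p₁ p₂) (Sum.elim u₁ u₂)

theorem add_dotProduct_self_add_sub_dotProduct_self (u v : n → ℝ) :
    (u + v) ⬝ᵥ (u + v) + (u - v) ⬝ᵥ (u - v) = 2 * (u ⬝ᵥ u + v ⬝ᵥ v) := by
  simp only [add_dotProduct, dotProduct_add, sub_dotProduct, dotProduct_sub, dotProduct_comm v u]
  ring

/-- The two vectors on the left are the real and imaginary parts of `(a + i a') ⊗ (c + i c')`. -/
theorem outer_sub_dotProduct_self_add_outer_add_dotProduct_self (a a' : m → ℝ) (c c' : n → ℝ) :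
    (fun q : m × n => a q.1 * c q.2 - a' q.1 * c' q.2) ⬝ᵥ
        (fun q : m × n => a q.1 * c q.2 - a' q.1 * c' q.2) +
      (fun q : m × n => a q.1 * c' q.2 + a' q.1 * c q.2) ⬝ᵥ
        (fun q : m × n => a q.1 * c' q.2 + a' q.1 * c q.2) =
      (a ⬝ᵥ a + a' ⬝ᵥ a') * (c ⬝ᵥ c + c' ⬝ᵥ c') := by
  simp only [dotProduct, Fintype.sum_prod_type, ← Finset.sum_add_distrib, Finset.sum_mul_sum]
  exact Finset.sum_congr rfl fun i _ => Finset.sum_congr rfl fun k _ => by ring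

theorem IsHermitian.dotProduct_mulVec_le_iSup_eigenvalues [DecidableEq n] {A : Matrix n n ℝ}
    (hA : A.IsHermitian) (y : n → ℝ) :
    y ⬝ᵥ A *ᵥ y ≤ (⨆ i, hA.eigenvalues i) * (y ⬝ᵥ y) := by
  set U : Matrix n n ℝ := (hA.eigenvectorUnitary : Matrix n n ℝ)
  have hUt : star U = Uᵀ := conjTranspose_eq_transpose_of_trivial U
  have hUU : U * Uᵀ = 1 := hUt ▸ Unitary.mul_star_self_of_mem hA.eigenvectorUnitary.2
  set z := Uᵀ *ᵥ y
  have hz : z ⬝ᵥ z = y ⬝ᵥ y := by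
    rw [dotProduct_mulVec, vecMul_transpose, mulVec_mulVec, hUU, one_mulVec]
  have hyAy : y ⬝ᵥ A *ᵥ y = ∑ i, hA.eigenvalues i * (z i * z i) := by
    conv_lhs => rw [hA.spectral_theorem, Unitary.conjStarAlgAut_apply]
    rw [hUt, ← mulVec_mulVec, ← mulVec_mulVec, dotProduct_mulVec y, ← mulVec_transpose]
    simp only [dotProduct, mulVec_diagonal, Function.comp_apply, RCLike.ofReal_real_eq_id, id]
    exact Finset.sum_congr rfl fun i _ => by ring
  rw [hyAy, ← hz, dotProduct, Finset.mul_sum]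
  exact Finset.sum_le_sum fun i _ =>
    mul_le_mul_of_nonneg_right (le_ciSup (Set.finite_range _).bddAbove i) (mul_self_nonneg _)

theorem iSup_eigenvalues_mul_transpose_nonneg [DecidableEq m] (M : Matrix m p ℝ)
    (hH : (M * Mᵀ).IsHermitian) : 0 ≤ ⨆ i, hH.eigenvalues i := by
  have hM : (M * Mᵀ).PosSemidef := by
    simpa only [conjTranspose_eq_transpose_of_trivial] using posSemidef_self_mul_conjTranspose M
  exact Real.iSup_nonneg hM.eigenvalues_nonneg

/-- Writing `‖M w‖⁴ = ⟪Mᵀ M w, w⟫²` and applying Cauchy–Schwarz avoids comparing the spectra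
of `M Mᵀ` and `Mᵀ M`. -/
theorem mulVec_dotProduct_mulVec_le [DecidableEq m] (M : Matrix m p ℝ)
    (hH : (M * Mᵀ).IsHermitian) (w : p → ℝ) :
    M *ᵥ w ⬝ᵥ M *ᵥ w ≤ (⨆ i, hH.eigenvalues i) * (w ⬝ᵥ w) := by
  set Λ := ⨆ i, hH.eigenvalues i
  set y := M *ᵥ w
  have hMt : Mᵀ *ᵥ y ⬝ᵥ Mᵀ *ᵥ y ≤ Λ * (y ⬝ᵥ y) := by
    rw [dotProduct_mulVec, vecMul_transpose, mulVec_mulVec, dotProduct_comm]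
    exact hH.dotProduct_mulVec_le_iSup_eigenvalues y
  have hyy : y ⬝ᵥ y = Mᵀ *ᵥ y ⬝ᵥ w := by
    rw [mulVec_transpose, ← dotProduct_mulVec]
  have key : (y ⬝ᵥ y) ^ 2 ≤ Λ * (y ⬝ᵥ y) * (w ⬝ᵥ w) :=
    calc (y ⬝ᵥ y) ^ 2 = (Mᵀ *ᵥ y ⬝ᵥ w) ^ 2 := by rw [hyy]
      _ ≤ (Mᵀ *ᵥ y ⬝ᵥ Mᵀ *ᵥ y) * (w ⬝ᵥ w) := sq_dotProduct_le _ _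
      _ ≤ Λ * (y ⬝ᵥ y) * (w ⬝ᵥ w) :=
        mul_le_mul_of_nonneg_right hMt (dotProduct_self_nonneg w)
  have hΛ : 0 ≤ Λ := iSup_eigenvalues_mul_transpose_nonneg M hH
  have hy : 0 ≤ y ⬝ᵥ y := dotProduct_self_nonneg y
  nlinarith [mul_nonneg hΛ (dotProduct_self_nonneg w)]

theorem sq_dotProduct_mulVec_add_le [DecidableEq m] (M : Matrix m p ℝ)
    (hH : (M * Mᵀ).IsHermitian) (p₁ p₂ : m → ℝ) (w₁ w₂ : p → ℝ) :
    (p₁ ⬝ᵥ M *ᵥ w₁ + p₂ ⬝ᵥ M *ᵥ w₂) ^ 2 ≤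
      (p₁ ⬝ᵥ p₁ + p₂ ⬝ᵥ p₂) * ((⨆ i, hH.eigenvalues i) * (w₁ ⬝ᵥ w₁ + w₂ ⬝ᵥ w₂)) := by
  have hp : 0 ≤ p₁ ⬝ᵥ p₁ + p₂ ⬝ᵥ p₂ := add_nonneg (dotProduct_self_nonneg _) (dotProduct_self_nonneg _)
  refine (sq_dotProduct_add_dotProduct_le _ _ _ _).trans (mul_le_mul_of_nonneg_left ?_ hp)
  rw [mul_add]
  exact add_le_add (mulVec_dotProduct_mulVec_le M hH w₁) (mulVec_dotProduct_mulVec_le M hH w₂)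

theorem kronecker_sub {α k l r s : Type*} [NonUnitalNonAssocRing α] (A : Matrix k l α)
    (B C : Matrix r s α) : A ⊗ₖ (B - C) = A ⊗ₖ B - A ⊗ₖ C := by
  ext ⟨i₁, i₂⟩ ⟨j₁, j₂⟩
  simp [mul_sub]

theorem IsHermitian.kronecker {k l : Type*} {A : Matrix k k ℂ} {B : Matrix l l ℂ}
    (hA : A.IsHermitian) (hB : B.IsHermitian) : (A ⊗ₖ B).IsHermitian := by
  rw [IsHermitian, conjTranspose_kronecker, hA.eq, hB.eq]

theorem IsHermitian.ofReal_re_trace_mul {A B : Matrix n n ℂ} (hA : A.IsHermitian)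
    (hB : B.IsHermitian) : (((A * B).trace).re : ℂ) = (A * B).trace := by
  refine Complex.conj_eq_iff_re.mp ?_
  rw [← Complex.star_def, ← trace_conjTranspose, conjTranspose_mul, hA.eq, hB.eq, trace_mul_comm]

end Matrix

theorem pauli_isHermitian (i : Fin 3) : (pauli i).IsHermitian := by
  fin_cases i <;> ext a b <;> fin_cases a <;> fin_cases b <;> simp [pauli, conjTranspose_apply]

theorem obs_add (x y : Fin 3 → ℝ) : obs (x + y) = obs x + obs y := by
  simp [obs, add_smul, Finset.sum_add_distrib]

theorem obs_sub (x y : Fin 3 → ℝ) : obs (x - y) = obs x - obs y := by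
  simp [obs, sub_smul, Finset.sum_sub_distrib]

noncomputable def correlationMatrix (ρ : Matrix (Fin 2 × Fin 2 × Fin 2) (Fin 2 × Fin 2 × Fin 2) ℂ) :
    Matrix (Fin 3) (Fin 3 × Fin 3) ℝ :=
  fun j q => ((ρ * (pauli q.1 ⊗ₖ (pauli j ⊗ₖ pauli q.2))).trace).re

section Correlations

variable {ρ : Matrix (Fin 2 × Fin 2 × Fin 2) (Fin 2 × Fin 2 × Fin 2) ℂ}

theorem trace_obs_kronecker_mul (hρ : ρ.IsHermitian) (x y z : Fin 3 → ℝ) :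
    ((obs x ⊗ₖ (obs y ⊗ₖ obs z)) * ρ).trace
      = ((y ⬝ᵥ correlationMatrix ρ *ᵥ fun q => x q.1 * z q.2 : ℝ) : ℂ) := by
  have hcorr : ∀ i j k, (ρ * (pauli i ⊗ₖ (pauli j ⊗ₖ pauli k))).trace
      = (correlationMatrix ρ j (i, k) : ℂ) := fun i j k =>
    (hρ.ofReal_re_trace_mul ((pauli_isHermitian i).kronecker
      ((pauli_isHermitian j).kronecker (pauli_isHermitian k)))).symm
  simp only [obs, Fin.sum_univ_three, add_kronecker, kronecker_add, smul_kronecker,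
    kronecker_smul, Matrix.add_mul, Matrix.smul_mul, trace_add, trace_smul, trace_mul_comm _ ρ,
    hcorr, dotProduct, mulVec, Fintype.sum_prod_type, smul_eq_mul]
  push_cast
  ring

theorem trace_svetlichny_mul (hρ : ρ.IsHermitian) (a a' b b' c c' : Fin 3 → ℝ) :
    (svetlichny a a' b b' c c' * ρ).trace =
      (((b + b') ⬝ᵥ correlationMatrix ρ *ᵥ (fun q => a q.1 * c q.2 - a' q.1 * c' q.2)
        + (b - b') ⬝ᵥ correlationMatrix ρ *ᵥ (fun q => a q.1 * c' q.2 + a' q.1 * c q.2) : ℝ)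
        : ℂ) := by
  rw [svetlichny, ← obs_add, ← obs_sub]
  simp only [kronecker_add, kronecker_sub, Matrix.add_mul, Matrix.sub_mul, trace_add, trace_sub,
    trace_obs_kronecker_mul hρ]
  have h₁ : (fun q : Fin 3 × Fin 3 => a q.1 * c q.2 - a' q.1 * c' q.2) =
      (fun q => a q.1 * c q.2) - fun q => a' q.1 * c' q.2 := rfl
  have h₂ : (fun q : Fin 3 × Fin 3 => a q.1 * c' q.2 + a' q.1 * c q.2) =
      (fun q => a q.1 * c' q.2) + fun q => a' q.1 * c q.2 := rfl
  rw [h₁, h₂, mulVec_sub, mulVec_add, dotProduct_sub, dotProduct_add]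
  push_cast
  ring

end Correlations

theorem svetlichny_filtered_upper_bound_general
    (ρ : Matrix (Fin 2 × Fin 2 × Fin 2) (Fin 2 × Fin 2 × Fin 2) ℂ)
    (hρ : ρ.PosSemidef)
    (FA FB FC : Matrix (Fin 2) (Fin 2) ℂ)
    (N : ℝ)
    (ρ' : Matrix (Fin 2 × Fin 2 × Fin 2) (Fin 2 × Fin 2 × Fin 2) ℂ)
    (hρ' : ρ' = ((N : ℂ))⁻¹ • ((FA ⊗ₖ (FB ⊗ₖ FC)) * ρ * (FA ⊗ₖ (FB ⊗ₖ FC))ᴴ))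
    (M' : Matrix (Fin 3) (Fin 3 × Fin 3) ℝ)
    (hM' : ∀ (j : Fin 3) (i k : Fin 3),
      M' j (i, k) = ((ρ' * (pauli i ⊗ₖ (pauli j ⊗ₖ pauli k))).trace).re)
    (hH : (M' * M'ᵀ).IsHermitian)
    (lam : ℝ) (hlam : lam = Real.sqrt (⨆ i : Fin 3, hH.eigenvalues i)) :
    ∀ a a' b b' c c' : Fin 3 → ℝ,
      (∑ i : Fin 3, a i ^ 2 = 1) → (∑ i : Fin 3, a' i ^ 2 = 1) →
      (∑ i : Fin 3, b i ^ 2 = 1) → (∑ i : Fin 3, b' i ^ 2 = 1) →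
      (∑ i : Fin 3, c i ^ 2 = 1) → (∑ i : Fin 3, c' i ^ 2 = 1) →
      ‖(svetlichny a a' b b' c c' * ρ').trace‖ ≤ 4 * lam := by
  intro a a' b b' c c' ha ha' hb hb' hc hc'
  have hρ'H : ρ'.IsHermitian := by
    rw [hρ']
    exact (isHermitian_mul_mul_conjTranspose _ hρ.1).smul (by simp [IsSelfAdjoint])
  obtain rfl : M' = correlationMatrix ρ' := by
    ext j ⟨i, k⟩
    exact hM' j i k
  have hunit : ∀ x : Fin 3 → ℝ, ∑ i, x i ^ 2 = 1 → x ⬝ᵥ x = 1 := fun x hx => by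
    simpa only [dotProduct, sq] using hx
  have hlam2 : lam ^ 2 = ⨆ i, hH.eigenvalues i := by
    rw [hlam, Real.sq_sqrt (iSup_eigenvalues_mul_transpose_nonneg _ hH)]
  rw [trace_svetlichny_mul hρ'H, Complex.norm_real, Real.norm_eq_abs]
  refine abs_le_of_sq_le_sq ?_ (by rw [hlam]; positivity)
  calc _ ≤ _ := sq_dotProduct_mulVec_add_le _ hH _ _ _ _
    _ = (4 * lam) ^ 2 := by
      rw [add_dotProduct_self_add_sub_dotProduct_self,
        outer_sub_dotProduct_self_add_outer_add_dotProduct_self, hunit a ha, hunit a' ha',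
        hunit b hb, hunit b' hb', hunit c hc, hunit c' hc', ← hlam2]
      ring

/-- Theorem 1: for the locally filtered state `ρ'`, the quantum value of any Svetlichny
operator is bounded by `4λ₁'`, where `λ₁'` is the maximal singular value of the
correlation matrix `M'` of `ρ'`. -/
theorem svetlichny_filtered_upper_bound
    (ρ : Matrix (Fin 2 × Fin 2 × Fin 2) (Fin 2 × Fin 2 × Fin 2) ℂ)
    (hρ : ρ.PosSemidef) (hρtr : ρ.trace = 1)
    (FA FB FC : Matrix (Fin 2) (Fin 2) ℂ)
    (hFA : FA.PosSemidef) (hFB : FB.PosSemidef) (hFC : FC.PosSemidef)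
    (N : ℝ) (hNpos : 0 < N)
    (hN : ((FA ⊗ₖ (FB ⊗ₖ FC)) * ρ * (FA ⊗ₖ (FB ⊗ₖ FC))ᴴ).trace = (N : ℂ))
    (ρ' : Matrix (Fin 2 × Fin 2 × Fin 2) (Fin 2 × Fin 2 × Fin 2) ℂ)
    (hρ' : ρ' = ((N : ℂ))⁻¹ • ((FA ⊗ₖ (FB ⊗ₖ FC)) * ρ * (FA ⊗ₖ (FB ⊗ₖ FC))ᴴ))
    (M' : Matrix (Fin 3) (Fin 3 × Fin 3) ℝ)
    (hM' : ∀ (j : Fin 3) (i k : Fin 3),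
      M' j (i, k) = ((ρ' * (pauli i ⊗ₖ (pauli j ⊗ₖ pauli k))).trace).re)
    (hH : (M' * M'ᵀ).IsHermitian)
    (lam : ℝ) (hlam : lam = Real.sqrt (⨆ i : Fin 3, hH.eigenvalues i)) :
    ∀ a a' b b' c c' : Fin 3 → ℝ,
      (∑ i : Fin 3, a i ^ 2 = 1) → (∑ i : Fin 3, a' i ^ 2 = 1) →
      (∑ i : Fin 3, b i ^ 2 = 1) → (∑ i : Fin 3, b' i ^ 2 = 1) →
      (∑ i : Fin 3, c i ^ 2 = 1) → (∑ i : Fin 3, c' i ^ 2 = 1) →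
      ‖(svetlichny a a' b b' c c' * ρ').trace‖ ≤ 4 * lam :=
  svetlichny_filtered_upper_bound_general ρ hρ FA FB FC N ρ' hρ' M' hM' hH lam hlam
end

section
/- Let ρ_χ(p) = p |Ψ⟩⟨Ψ| + (1−p) |00⟩⟨00|⊗(I₂/2) with |Ψ⟩ = cos(π/8)|000⟩ + sin(π/8)|111⟩, 0 < p ≤ 1, and let F_A = diag(x,1), F_B = diag(y,1), F_C = diag(z,1) with x, y, z > 0. Set N = ((2−√2)/4)p + ((1−p)/2)x²y² + ((2+√2 p)/4)x²y²z² and D = −((2−√2)/4)p − ((1−p)/2)x²y² + ((2+√2 p)/4)x²y²z². Then N = tr[(F_A⊗F_B⊗F_C) ρ_χ(p) (F_A⊗F_B⊗F_C)†], and the 3×9 matrix M̃ with entries M̃_{m,(l,n)} = tr[ρ_χ(p)(F_A σ_l F_A ⊗ F_B σ_m F_B ⊗ F_C σ_n F_C)] has exactly the nonzero entries M̃_{111} = (√2/2)pxyz, M̃_{122} = M̃_{212} = M̃_{221} = −(√2/2)pxyz, M̃_{333} = D (indices M̃_{lmn}), and the eigenvalues of M̃ M̃ᵀ are p²x²y²z²,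 p²x²y²z², D²; hence the correlation matrix of the filtered state ρ' = (F_A⊗F_B⊗F_C) ρ_χ(p) (F_A⊗F_B⊗F_C)†/N has singular values pxyz/N, pxyz/N, |D|/N. -/
open Matrix Polynomial
open scoped Kronecker ComplexOrder

/-- The correlation matrix of a three-qubit state: `M_{j,(i,k)} = tr[ρ(σ_i⊗σ_j⊗σ_k)]`. -/
noncomputable def corrMat (ρ : Matrix (Fin 2 × Fin 2 × Fin 2) (Fin 2 × Fin 2 × Fin 2) ℂ) :
    Matrix (Fin 3) (Fin 3 × Fin 3) ℝ :=
  fun j ik => ((ρ * (pauli ik.1 ⊗ₖ (pauli j ⊗ₖ pauli ik.2))).trace).re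

/-- The vector `|Ψ⟩ = cos(π/8)|000⟩ + sin(π/8)|111⟩`. -/
noncomputable def psiChi : Fin 2 × Fin 2 × Fin 2 → ℂ :=
  fun x => if x = (0, 0, 0) then ((Real.cos (Real.pi / 8) : ℝ) : ℂ)
    else if x = (1, 1, 1) then ((Real.sin (Real.pi / 8) : ℝ) : ℂ) else 0

/-- The rank-one projector `|0⟩⟨0|`. -/
noncomputable def E00 : Matrix (Fin 2) (Fin 2) ℂ := !![1, 0; 0, 0]

/-- The state `ρ_χ(p) = p|Ψ⟩⟨Ψ| + (1-p)|00⟩⟨00| ⊗ I₂/2`. -/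
noncomputable def rhoChi (p : ℝ) :
    Matrix (Fin 2 × Fin 2 × Fin 2) (Fin 2 × Fin 2 × Fin 2) ℂ :=
  (p : ℂ) • Matrix.vecMulVec psiChi (star psiChi)
    + ((1 - p : ℝ) : ℂ) • (E00 ⊗ₖ (E00 ⊗ₖ (((2 : ℂ))⁻¹ • (1 : Matrix (Fin 2) (Fin 2) ℂ))))

/-! Conjugating by `K = F_A ⊗ F_B ⊗ F_C` and cycling the trace turns `tr[KρK† (σ_l ⊗ σ_m ⊗ σ_n)]`
into `tr[ρ (F_Aσ_lF_A ⊗ F_Bσ_mF_B ⊗ F_Cσ_nF_C)]`. Since `ρ_χ(p)` lives on `|000⟩, |111⟩` plus a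
diagonal noise term, such a trace only sees four entries of each factor, weighted by
`cos²(π/8) = (2+√2)/4`, `sin²(π/8) = (2-√2)/4` and `sin(π/8)cos(π/8) = √2/4`. This gives `N` and
the GHZ-like sparsity pattern of `M̃`, whose three rows have disjoint supports, so `M̃M̃ᵀ` is
diagonal; the correlation matrix of `ρ'` is `M̃ / N`. -/

open Real in
lemma cos_sq_pi_div_eight : cos (π / 8) ^ 2 = (2 + √2) / 4 := by
  rw [cos_pi_div_eight, div_pow, sq_sqrt (by positivity)]
  norm_num

open Real in
lemma sin_sq_pi_div_eight : sin (π / 8) ^ 2 = (2 - √2) / 4 := by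
  have : √2 ≤ 2 := by rw [sqrt_le_left (by norm_num)]; norm_num
  rw [sin_pi_div_eight, div_pow, sq_sqrt (by linarith)]
  norm_num

open Real in
lemma sin_mul_cos_pi_div_eight : sin (π / 8) * cos (π / 8) = √2 / 4 := by
  have h := sin_two_mul (π / 8)
  rw [show 2 * (π / 8) = π / 4 by ring, sin_pi_div_four] at h
  linarith

open Real in
lemma trace_rhoChi_mul_kronecker (p : ℝ) (A B C : Matrix (Fin 2) (Fin 2) ℂ) :
    (rhoChi p * (A ⊗ₖ (B ⊗ₖ C))).trace =
      (p : ℂ) * ((2 + √2) / 4 * (A 0 0 * B 0 0 * C 0 0) + (2 - √2) / 4 * (A 1 1 * B 1 1 * C 1 1)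
        + √2 / 4 * (A 0 1 * B 0 1 * C 0 1 + A 1 0 * B 1 0 * C 1 0))
      + (1 - p) / 2 * (A 0 0 * B 0 0 * (C 0 0 + C 1 1)) := by
  have hcos : ((Real.cos (π / 8) : ℝ) : ℂ) ^ 2 = (2 + √2) / 4 := by
    rw [← Complex.ofReal_pow, cos_sq_pi_div_eight]; push_cast; ring
  have hsin : ((Real.sin (π / 8) : ℝ) : ℂ) ^ 2 = (2 - √2) / 4 := by
    rw [← Complex.ofReal_pow, sin_sq_pi_div_eight]; push_cast; ring
  have hsincos : ((Real.sin (π / 8) : ℝ) : ℂ) * (Real.cos (π / 8) : ℝ) = √2 / 4 := by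
    rw [← Complex.ofReal_mul, sin_mul_cos_pi_div_eight]; push_cast; ring
  simp only [rhoChi, add_mul, smul_mul, trace_add, trace_smul]
  simp only [trace, diag, mul_apply, Fintype.sum_prod_type, Fin.sum_univ_two, kroneckerMap_apply,
    vecMulVec_apply, Pi.star_apply, psiChi]
  generalize Real.cos (π / 8) = c at hcos hsincos ⊢
  generalize Real.sin (π / 8) = s at hsin hsincos ⊢
  simp only [↓reduceIte, RCLike.star_def, Complex.conj_ofReal, Prod.ext_iff, one_ne_zero,
    zero_ne_one, and_false, and_true, and_self, star_zero, mul_zero, zero_mul, add_zero, zero_add,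
    smul_eq_mul, Complex.ofReal_sub, Complex.ofReal_one, E00, of_apply, cons_val', cons_val_zero,
    cons_val_one, cons_val_fin_one, Matrix.smul_apply, one_apply_eq, mul_one, one_mul, ne_eq,
    not_false_eq_true, one_apply_ne]
  linear_combination (p * (A 0 0 * B 0 0 * C 0 0)) * hcos + (p * (A 1 1 * B 1 1 * C 1 1)) * hsin
    + (p * (A 0 1 * B 0 1 * C 0 1 + A 1 0 * B 1 0 * C 1 0)) * hsincos

lemma diagonal_mul_mul_diagonal_fin_two {R : Type*} [CommRing R] (t : R)
    (P : Matrix (Fin 2) (Fin 2) R) :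
    diagonal ![t, 1] * P * diagonal ![t, 1] = !![t ^ 2 * P 0 0, t * P 0 1; t * P 1 0, P 1 1] := by
  ext i j
  fin_cases i <;> fin_cases j <;>
    simp only [Fin.zero_eta, Fin.mk_one, Fin.isValue, mul_diagonal, diagonal_mul, of_apply,
      cons_val', cons_val_zero, cons_val_one, cons_val_fin_one, mul_one, one_mul] <;> ring

lemma trace_rhoChi_mul_filtered_kronecker (p x y z : ℝ) (P Q R : Matrix (Fin 2) (Fin 2) ℂ) :
    (rhoChi p * ((diagonal ![(x : ℂ), 1] * P * diagonal ![(x : ℂ), 1]) ⊗ₖ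
      ((diagonal ![(y : ℂ), 1] * Q * diagonal ![(y : ℂ), 1]) ⊗ₖ
        (diagonal ![(z : ℂ), 1] * R * diagonal ![(z : ℂ), 1])))).trace =
      (p : ℂ) * ((2 + √2) / 4 * (x * y * z) ^ 2 * (P 0 0 * Q 0 0 * R 0 0)
        + (2 - √2) / 4 * (P 1 1 * Q 1 1 * R 1 1)
        + √2 / 4 * (x * y * z) * (P 0 1 * Q 0 1 * R 0 1 + P 1 0 * Q 1 0 * R 1 0))
      + (1 - p) / 2 * (x * y) ^ 2 * (P 0 0 * Q 0 0 * (z ^ 2 * R 0 0 + R 1 1)) := by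
  simp only [trace_rhoChi_mul_kronecker, diagonal_mul_mul_diagonal_fin_two, of_apply, cons_val',
    cons_val_zero, cons_val_one, empty_val', cons_val_fin_one]
  ring

lemma trace_conj_kronecker_mul {ι κ μ : Type*} [Fintype ι] [Fintype κ] [Fintype μ]
    {R : Type*} [CommRing R] [StarRing R]
    (A P : Matrix ι ι R) (B Q : Matrix κ κ R) (C S : Matrix μ μ R)
    (ρ : Matrix (ι × κ × μ) (ι × κ × μ) R) :
    ((A ⊗ₖ (B ⊗ₖ C)) * ρ * (A ⊗ₖ (B ⊗ₖ C))ᴴ * (P ⊗ₖ (Q ⊗ₖ S))).trace =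
      (ρ * ((Aᴴ * P * A) ⊗ₖ ((Bᴴ * Q * B) ⊗ₖ (Cᴴ * S * C)))).trace := by
  rw [Matrix.mul_assoc, Matrix.mul_assoc, trace_mul_comm, Matrix.mul_assoc,
    conjTranspose_kronecker, conjTranspose_kronecker, ← mul_kronecker_mul, ← mul_kronecker_mul,
    ← mul_kronecker_mul, ← mul_kronecker_mul]

lemma conjTranspose_diagonal_ofReal_one (t : ℝ) :
    (diagonal ![(t : ℂ), 1])ᴴ = diagonal ![(t : ℂ), 1] := by
  rw [diagonal_conjTranspose]
  congr 1
  ext i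
  fin_cases i <;> simp

lemma corrMat_ofReal_smul (c : ℝ) (ρ : Matrix (Fin 2 × Fin 2 × Fin 2) (Fin 2 × Fin 2 × Fin 2) ℂ) :
    corrMat ((c : ℂ) • ρ) = c • corrMat ρ := by
  ext j ik
  simp only [corrMat, smul_mul, trace_smul, smul_eq_mul, Complex.re_ofReal_mul, Matrix.smul_apply]

/-- The sparsity pattern of `M̃`: the paper's `M̃_{lmn}` (indices `1, 2, 3` here `0, 1, 2`) sits in
row `m`, column `(l, n)`. -/
def ghzCorr (a d : ℝ) : Matrix (Fin 3) (Fin 3 × Fin 3) ℝ := fun m ln =>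
  if (ln.1, m, ln.2) = (0, 0, 0) then a
  else if (ln.1, m, ln.2) = (0, 1, 1) ∨ (ln.1, m, ln.2) = (1, 0, 1) ∨ (ln.1, m, ln.2) = (1, 1, 0)
    then -a
  else if (ln.1, m, ln.2) = (2, 2, 2) then d
  else 0

lemma smul_ghzCorr (c a d : ℝ) : c • ghzCorr a d = ghzCorr (c * a) (c * d) := by
  ext m ⟨l, n⟩
  simp only [Matrix.smul_apply, ghzCorr, smul_eq_mul]
  split_ifs <;> ring

lemma ghzCorr_mul_transpose (a d : ℝ) :
    ghzCorr a d * (ghzCorr a d)ᵀ = diagonal ![2 * a ^ 2, 2 * a ^ 2, d ^ 2] := by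
  ext i j
  fin_cases i <;> fin_cases j <;>
    simp [ghzCorr, mul_apply, Fintype.sum_prod_type, Fin.sum_univ_three, Prod.ext_iff] <;> ring

lemma charpoly_diagonal_fin_three {R : Type*} [CommRing R] (α β : R) :
    (diagonal ![α, α, β]).charpoly = (X - C α) ^ 2 * (X - C β) := by
  rw [charpoly_diagonal, Fin.prod_univ_three]
  simp only [cons_val_zero, cons_val_one, cons_val_two, head_cons, tail_cons]
  ring

lemma charpoly_ghzCorr_mul_transpose (a d : ℝ) :
    (ghzCorr a d * (ghzCorr a d)ᵀ).charpoly = (X - C (2 * a ^ 2)) ^ 2 * (X - C (d ^ 2)) := by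
  rw [ghzCorr_mul_transpose, charpoly_diagonal_fin_three]

lemma two_mul_sq_sqrt_two_div_two_mul (q : ℝ) : 2 * (√2 / 2 * q) ^ 2 = q ^ 2 := by
  rw [mul_pow, div_pow, Real.sq_sqrt zero_le_two]
  ring

theorem filtered_rhoChi_general (p x y z : ℝ)
    (FA FB FC : Matrix (Fin 2) (Fin 2) ℂ)
    (hFA : FA = Matrix.diagonal ![(x : ℂ), 1])
    (hFB : FB = Matrix.diagonal ![(y : ℂ), 1])
    (hFC : FC = Matrix.diagonal ![(z : ℂ), 1])
    (N D : ℝ)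
    (hNdef : N = (2 - Real.sqrt 2) / 4 * p + (1 - p) / 2 * (x ^ 2 * y ^ 2)
      + (2 + Real.sqrt 2 * p) / 4 * (x ^ 2 * y ^ 2 * z ^ 2))
    (hDdef : D = -((2 - Real.sqrt 2) / 4 * p) - (1 - p) / 2 * (x ^ 2 * y ^ 2)
      + (2 + Real.sqrt 2 * p) / 4 * (x ^ 2 * y ^ 2 * z ^ 2))
    (Mt : Matrix (Fin 3) (Fin 3 × Fin 3) ℝ)
    (hMt : ∀ (m : Fin 3) (l n : Fin 3),
      Mt m (l, n) = ((rhoChi p * ((FA * pauli l * FA) ⊗ₖ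
        ((FB * pauli m * FB) ⊗ₖ (FC * pauli n * FC)))).trace).re)
    (ρ' : Matrix (Fin 2 × Fin 2 × Fin 2) (Fin 2 × Fin 2 × Fin 2) ℂ)
    (hρ' : ρ' = ((N : ℂ))⁻¹ • ((FA ⊗ₖ (FB ⊗ₖ FC)) * rhoChi p * (FA ⊗ₖ (FB ⊗ₖ FC))ᴴ)) :
    ((FA ⊗ₖ (FB ⊗ₖ FC)) * rhoChi p * (FA ⊗ₖ (FB ⊗ₖ FC))ᴴ).trace = (N : ℂ)
    ∧ (∀ l m n : Fin 3,
      Mt m (l, n) =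
        if (l, m, n) = (0, 0, 0) then Real.sqrt 2 / 2 * (p * x * y * z)
        else if (l, m, n) = (0, 1, 1) ∨ (l, m, n) = (1, 0, 1) ∨ (l, m, n) = (1, 1, 0) then
          -(Real.sqrt 2 / 2 * (p * x * y * z))
        else if (l, m, n) = (2, 2, 2) then D
        else 0)
    ∧ (Mt * Mtᵀ).charpoly
        = (X - C (p ^ 2 * x ^ 2 * y ^ 2 * z ^ 2)) ^ 2 * (X - C (D ^ 2))
    ∧ (corrMat ρ' * (corrMat ρ')ᵀ).charpoly
        = (X - C ((p * x * y * z / N) ^ 2)) ^ 2 * (X - C ((D / N) ^ 2)) := by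
  have hFAH : FAᴴ = FA := hFA ▸ conjTranspose_diagonal_ofReal_one x
  have hFBH : FBᴴ = FB := hFB ▸ conjTranspose_diagonal_ofReal_one y
  have hFCH : FCᴴ = FC := hFC ▸ conjTranspose_diagonal_ofReal_one z
  have hMt_eq : Mt = ghzCorr (√2 / 2 * (p * x * y * z)) D := by
    subst hDdef
    ext m ⟨l, n⟩
    rw [hMt, hFA, hFB, hFC, trace_rhoChi_mul_filtered_kronecker]
    fin_cases l <;> fin_cases m <;> fin_cases n <;>
      norm_num [ghzCorr, pauli, Fin.ext_iff (n := 3), sq] <;> ring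
  have hcorr : corrMat ((FA ⊗ₖ (FB ⊗ₖ FC)) * rhoChi p * (FA ⊗ₖ (FB ⊗ₖ FC))ᴴ) = Mt := by
    ext j ⟨i, k⟩
    rw [corrMat, trace_conj_kronecker_mul, hFAH, hFBH, hFCH, hMt]
  refine ⟨?_, fun l m n => by rw [hMt_eq]; rfl, ?_, ?_⟩
  · rw [← Matrix.mul_one (_ * _ * _), ← one_kronecker_one, ← one_kronecker_one,
      trace_conj_kronecker_mul, hFAH, hFBH, hFCH, hFA, hFB, hFC,
      trace_rhoChi_mul_filtered_kronecker, hNdef]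
    simp only [one_apply_eq, one_apply_ne zero_ne_one, one_apply_ne one_ne_zero]
    push_cast
    ring
  · rw [hMt_eq, charpoly_ghzCorr_mul_transpose, two_mul_sq_sqrt_two_div_two_mul, mul_pow, mul_pow,
      mul_pow]
  · rw [hρ', ← Complex.ofReal_inv, corrMat_ofReal_smul, hcorr, hMt_eq, smul_ghzCorr,
      charpoly_ghzCorr_mul_transpose, mul_left_comm, two_mul_sq_sqrt_two_div_two_mul,
      inv_mul_eq_div, inv_mul_eq_div]

/-- Local filtering of `ρ_χ(p)` with filters `diag(x,1), diag(y,1), diag(z,1)`: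
the normalization factor, the entries of the filtered matrix `M̃`, the eigenvalues of
`M̃ M̃ᵀ`, and the singular values of the correlation matrix of the filtered state. -/
theorem filtered_rhoChi (p x y z : ℝ) (hp0 : 0 < p) (hp1 : p ≤ 1)
    (hx : 0 < x) (hy : 0 < y) (hz : 0 < z)
    (FA FB FC : Matrix (Fin 2) (Fin 2) ℂ)
    (hFA : FA = Matrix.diagonal ![(x : ℂ), 1])
    (hFB : FB = Matrix.diagonal ![(y : ℂ), 1])
    (hFC : FC = Matrix.diagonal ![(z : ℂ), 1])
    (N D : ℝ)
    (hNdef : N = (2 - Real.sqrt 2) / 4 * p + (1 - p) / 2 * (x ^ 2 * y ^ 2)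
      + (2 + Real.sqrt 2 * p) / 4 * (x ^ 2 * y ^ 2 * z ^ 2))
    (hDdef : D = -((2 - Real.sqrt 2) / 4 * p) - (1 - p) / 2 * (x ^ 2 * y ^ 2)
      + (2 + Real.sqrt 2 * p) / 4 * (x ^ 2 * y ^ 2 * z ^ 2))
    (Mt : Matrix (Fin 3) (Fin 3 × Fin 3) ℝ)
    (hMt : ∀ (m : Fin 3) (l n : Fin 3),
      Mt m (l, n) = ((rhoChi p * ((FA * pauli l * FA) ⊗ₖ
        ((FB * pauli m * FB) ⊗ₖ (FC * pauli n * FC)))).trace).re)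
    (ρ' : Matrix (Fin 2 × Fin 2 × Fin 2) (Fin 2 × Fin 2 × Fin 2) ℂ)
    (hρ' : ρ' = ((N : ℂ))⁻¹ • ((FA ⊗ₖ (FB ⊗ₖ FC)) * rhoChi p * (FA ⊗ₖ (FB ⊗ₖ FC))ᴴ)) :
    ((FA ⊗ₖ (FB ⊗ₖ FC)) * rhoChi p * (FA ⊗ₖ (FB ⊗ₖ FC))ᴴ).trace = (N : ℂ)
    ∧ (∀ l m n : Fin 3,
      Mt m (l, n) =
        if (l, m, n) = (0, 0, 0) then Real.sqrt 2 / 2 * (p * x * y * z)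
        else if (l, m, n) = (0, 1, 1) ∨ (l, m, n) = (1, 0, 1) ∨ (l, m, n) = (1, 1, 0) then
          -(Real.sqrt 2 / 2 * (p * x * y * z))
        else if (l, m, n) = (2, 2, 2) then D
        else 0)
    ∧ (Mt * Mtᵀ).charpoly
        = (X - C (p ^ 2 * x ^ 2 * y ^ 2 * z ^ 2)) ^ 2 * (X - C (D ^ 2))
    ∧ (corrMat ρ' * (corrMat ρ')ᵀ).charpoly
        = (X - C ((p * x * y * z / N) ^ 2)) ^ 2 * (X - C ((D / N) ^ 2)) :=
  filtered_rhoChi_general p x y z FA FB FC hFA hFB hFC N D hNdef hDdef Mt hMt ρ' hρ'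
end
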